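/- Let $X$ be a complex Banach space, $G \subset X$ open, and $u: P \to \mathbb{R}$ defined on an open set $P \supset G$ by $u(x) = \min(1, \|\Im x\|/\mathrm{dist}(x, \partial G))$ for $x \in G$ and $u(x) = 1$ otherwise, where $X$ is a complexification and $(P\setminus G)\cap X_\mathbb{R} = \emptyset$. Then $u$ is locally Lipschitz on $P$. -/

import Mathlib

/-! Near a point of `G` the distance to `Gᶜ` is bounded below, so the quotient of the two
Lipschitz functions `‖Im ·‖` and `infDist · Gᶜ` is Lipschitz there, and so is its minimum with `1`.
A point `x ∈ P \ G` is not real, so `‖Im x‖ > 0`; on the ball of radius `‖Im x‖ / 2` the numerator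
exceeds the denominator and the function is identically `1`. -/

open scoped Classical

/-- A conjugation on a complex Banach space `X`, exhibiting `X` as the
    complexification of its real subspace of fixed points: an additive,
    complex-antilinear, involutive isometry. -/
structure Conjugation (X : Type*) [NormedAddCommGroup X] [NormedSpace ℂ X] where
  toFun : X → X
  map_add : ∀ x y : X, toFun (x + y) = toFun x + toFun y
  map_smul : ∀ (c : ℂ) (x : X), toFun (c • x) = (starRingEnd ℂ c) • toFun x
  invol : ∀ x : X, toFun (toFun x) = x
  isom : ∀ x : X, ‖toFun x‖ = ‖x‖

open Metric Set

namespace Conjugation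

variable {X : Type*} [NormedAddCommGroup X] [NormedSpace ℂ X] (σ : Conjugation X)

noncomputable def im (x : X) : X := ((2 * Complex.I)⁻¹ : ℂ) • (x - σ.toFun x)

lemma map_sub (x y : X) : σ.toFun (x - y) = σ.toFun x - σ.toFun y := by
  have map_neg : σ.toFun (-y) = -σ.toFun y := by simpa using σ.map_smul (-1) y
  rw [sub_eq_add_neg, σ.map_add, map_neg, sub_eq_add_neg]

lemma lipschitzWith_im : LipschitzWith 1 σ.im := by
  refine LipschitzWith.mk_one fun x y => ?_
  have im_sub : σ.im x - σ.im y = ((2 * Complex.I)⁻¹ : ℂ) • ((x - y) - σ.toFun (x - y)) := by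
    rw [im, im, ← smul_sub, σ.map_sub]; abel_nf
  calc dist (σ.im x) (σ.im y) = 2⁻¹ * ‖(x - y) - σ.toFun (x - y)‖ := by
        rw [dist_eq_norm, im_sub, norm_smul]; simp
    _ ≤ 2⁻¹ * (‖x - y‖ + ‖σ.toFun (x - y)‖) := by gcongr; exact norm_sub_le _ _
    _ = dist x y := by rw [σ.isom, dist_eq_norm]; ring

lemma im_ne_zero {x : X} (hx : σ.toFun x ≠ x) : σ.im x ≠ 0 :=
  smul_ne_zero (by simp) (sub_ne_zero.mpr hx.symm)

end Conjugation

namespace LipschitzOnWith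

variable {α : Type*} [PseudoMetricSpace α] {s : Set α}

lemma congr {β : Type*} [PseudoMetricSpace β] {K : NNReal} {f g : α → β}
    (hf : LipschitzOnWith K f s) (hfg : EqOn f g s) : LipschitzOnWith K g s :=
  fun x hx y hy => by rw [← hfg hx, ← hfg hy]; exact hf hx hy

lemma const_min {K : NNReal} {f : α → ℝ} (hf : LipschitzOnWith K f s) (a : ℝ) :
    LipschitzOnWith K (fun x => min a (f x)) s :=
  lipschitzOnWith_iff_restrict.mpr ((lipschitzOnWith_iff_restrict.mp hf).const_min a)

lemma div_of_le {Kf Kg : NNReal} {f g : α → ℝ} {C δ : ℝ} (hf : LipschitzOnWith Kf f s)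
    (hg : LipschitzOnWith Kg g s) (hfC : ∀ x ∈ s, |f x| ≤ C) (hδ : 0 < δ)
    (hgδ : ∀ x ∈ s, δ ≤ g x) :
    LipschitzOnWith (Real.toNNReal (Kf / δ + C * Kg / δ ^ 2)) (fun x => f x / g x) s := by
  refine LipschitzOnWith.of_dist_le' fun x hx y hy => ?_
  have hgx : 0 < g x := hδ.trans_le (hgδ x hx)
  have hgy : 0 < g y := hδ.trans_le (hgδ y hy)
  have split : f x / g x - f y / g y = (f x - f y) / g x + f y * (g y - g x) / (g x * g y) := by
    field_simp; ring
  calc dist (f x / g x) (f y / g y)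
      ≤ |f x - f y| / g x + |f y| * |g y - g x| / (g x * g y) := by
        rw [Real.dist_eq, split]
        refine (abs_add_le _ _).trans_eq ?_
        rw [abs_div, abs_div, abs_mul, abs_of_pos hgx, abs_of_pos (mul_pos hgx hgy)]
    _ ≤ Kf * dist x y / δ + C * (Kg * dist x y) / (δ * δ) := by
        have hC : 0 ≤ C := (abs_nonneg (f y)).trans (hfC y hy)
        gcongr
        · exact hf.dist_le_mul x hx y hy
        · exact hgδ x hx
        · exact hfC y hy
        · rw [abs_sub_comm]; exact hg.dist_le_mul x hx y hy
        · exact hgδ x hx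
        · exact hgδ y hy
    _ = (Kf / δ + C * Kg / δ ^ 2) * dist x y := by ring

end LipschitzOnWith

section infDist

variable {α : Type*} [PseudoMetricSpace α]

lemma lipschitzOnWith_div_infDist {K : NNReal} {f : α → ℝ} (hf : LipschitzWith K f) (s : Set α)
    (x : α) : ∃ K' : NNReal,
      LipschitzOnWith K' (fun y => f y / infDist y s) (ball x (infDist x s / 2)) := by
  set d := infDist x s
  rcases le_or_gt d 0 with hd | hd
  · exact ⟨0, by simp [ball_eq_empty.mpr (by linarith : d / 2 ≤ 0)]⟩
  -- on this ball the denominator stays above `d / 2` and `|f|` below `|f x| + K * (d / 2)`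
  refine ⟨_, hf.lipschitzOnWith.div_of_le (lipschitz_infDist_pt s).lipschitzOnWith
    (C := |f x| + K * (d / 2)) (fun y hy => ?_) (half_pos hd) (fun y hy => ?_)⟩
  · have hyx : dist y x < d / 2 := hy
    have hfyx : |f y - f x| ≤ K * dist y x := hf.dist_le_mul y x
    nlinarith [K.coe_nonneg, abs_sub_abs_le_abs_sub (f y) (f x)]
  · have hyx : dist y x < d / 2 := hy
    linarith [infDist_le_infDist_add_dist (x := x) (y := y) (s := s), dist_comm x y]

lemma infDist_lt_of_mem_ball {f : α → ℝ} (hf : LipschitzWith 1 f) {s : Set α} {x y : α}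
    (hx : x ∈ s) (hy : y ∈ ball x (f x / 2)) : infDist y s < f y := by
  have hyx : dist y x < f x / 2 := hy
  have hfyx := hf.dist_le_mul y x
  rw [Real.dist_eq, NNReal.coe_one, one_mul] at hfyx
  linarith [infDist_le_dist_of_mem (x := y) hx, (abs_le.mp hfyx).1]

end infDist

theorem stmt13_general {X : Type*} [NormedAddCommGroup X] [NormedSpace ℂ X]
    (σ : Conjugation X) (G P : Set X) (hG : IsOpen G)
    (hreal : (P \ G) ∩ {x | σ.toFun x = x} = ∅) :
    ∀ x ∈ P, ∃ (K : NNReal) (ε : ℝ), 0 < ε ∧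
      LipschitzOnWith K
        (fun y => if y ∈ G then
            min 1 (‖((2 * Complex.I)⁻¹ : ℂ) • (y - σ.toFun y)‖ / Metric.infDist y Gᶜ)
          else 1)
        (Metric.ball x ε ∩ P) := by
  intro x hx
  have hnorm_im : LipschitzWith 1 fun y => ‖σ.im y‖ := by
    simpa using! lipschitzWith_one_norm.comp σ.lipschitzWith_im
  by_cases hxG : x ∈ G
  · rcases Gᶜ.eq_empty_or_nonempty with hGc | hGc
    · -- here `G = univ` and the junk value `infDist y ∅ = 0` makes the function vanish
      refine ⟨0, 1, one_pos, (LipschitzWith.const (0 : ℝ)).lipschitzOnWith.congr fun y _ => ?_⟩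
      simp [compl_empty_iff.mp hGc]
    have hd : 0 < infDist x Gᶜ :=
      (hG.isClosed_compl.notMem_iff_infDist_pos hGc).mp (not_not_intro hxG)
    obtain ⟨K, hK⟩ := lipschitzOnWith_div_infDist hnorm_im Gᶜ x
    refine ⟨K, _, half_pos hd, ((hK.const_min 1).congr fun y hy => ?_).mono inter_subset_left⟩
    have hyG : y ∈ G := ball_infDist_compl_subset (ball_subset_ball (half_le_self hd.le) hy)
    simp [hyG, Conjugation.im]
  · have hσx : σ.toFun x ≠ x := fun h => (hreal ▸ ⟨⟨hx, hxG⟩, h⟩ : x ∈ (∅ : Set X))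
    have hpos : 0 < ‖σ.im x‖ := norm_pos_iff.mpr (σ.im_ne_zero hσx)
    refine ⟨0, _, half_pos hpos,
      ((LipschitzWith.const (1 : ℝ)).lipschitzOnWith.congr fun y hy => ?_).mono inter_subset_left⟩
    by_cases hyG : y ∈ G
    · have hlt : infDist y Gᶜ < ‖σ.im y‖ := infDist_lt_of_mem_ball hnorm_im hxG hy
      have hdy : 0 < infDist y Gᶜ :=
        (hG.isClosed_compl.notMem_iff_infDist_pos ⟨x, hxG⟩).mp (not_not_intro hyG)
      simp only [hyG, if_true]
      exact (min_eq_left ((one_le_div₀ hdy).mpr hlt.le)).symm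
    · simp [hyG]

/-- The function `u(x) = min(1, ‖Im x‖ / dist(x, ∂G))` on `G`, `u = 1` off `G`, is
    locally Lipschitz on `P`, where `G ⊆ P` are open and `(P \ G) ∩ X_ℝ = ∅`.
    Here `Im x = (x - conj x)/(2i)`. -/
theorem stmt13 {X : Type*} [NormedAddCommGroup X] [NormedSpace ℂ X] [CompleteSpace X]
    (σ : Conjugation X) (G P : Set X) (hG : IsOpen G) (hP : IsOpen P) (hGP : G ⊆ P)
    (hreal : (P \ G) ∩ {x | σ.toFun x = x} = ∅) :
    ∀ x ∈ P, ∃ (K : NNReal) (ε : ℝ), 0 < ε ∧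
      LipschitzOnWith K
        (fun y => if y ∈ G then
            min 1 (‖((2 * Complex.I)⁻¹ : ℂ) • (y - σ.toFun y)‖ / Metric.infDist y Gᶜ)
          else 1)
        (Metric.ball x ε ∩ P) :=
  stmt13_general σ G P hG hreal
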